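/- arXiv:2509.08899 — 5 statements merged into one kernel-verified Lean document; each statement's English description precedes it below -/
import Mathlib

section
/- The energy-constrained minimum ergotropy E_min(E) := min over density matrices ρ with Tr[ρH]=E of E(ρ) is a convex function of E on the interval [ε_min, ε_max] of attainable mean energies. -/
/-!
Ergotropy is energy minus passive energy, and the passive energy is an infimum of the
linear functionals `ρ ↦ Tr[UρU†H]` over the compact unitary group, hence concave; so
ergotropy is convex. Minimising a convex function over the fibres of a linear map gives a
convex function of the fibre value: mixing near-optimal states of energies `E₁`, `E₂` yields
a state of energy `aE₁ + bE₂` whose ergotropy is at most `a E_min(E₁) + b E_min(E₂) + ε`.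
The energies of density matrices fill `[ε_min, ε_max]`, since this set is convex and the
eigenprojections attain the endpoints.
-/

open Matrix
open scoped BigOperators ComplexOrder

noncomputable def energy {d : ℕ} (H ρ : Matrix (Fin d) (Fin d) ℂ) : ℝ :=
  (Matrix.trace (ρ * H)).re

noncomputable def ergotropy {d : ℕ} (H ρ : Matrix (Fin d) (Fin d) ℂ) : ℝ :=
  energy H ρ - ⨅ U : Matrix.unitaryGroup (Fin d) ℂ,
    energy H ((U : Matrix (Fin d) (Fin d) ℂ) * ρ * star (U : Matrix (Fin d) (Fin d) ℂ))

noncomputable def antiErgotropy {d : ℕ} (H ρ : Matrix (Fin d) (Fin d) ℂ) : ℝ :=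
  (⨆ U : Matrix.unitaryGroup (Fin d) ℂ,
    energy H ((U : Matrix (Fin d) (Fin d) ℂ) * ρ * star (U : Matrix (Fin d) (Fin d) ℂ))) - energy H ρ

noncomputable def minErg {d : ℕ} (H : Matrix (Fin d) (Fin d) ℂ) (E : ℝ) : ℝ :=
  sInf {x : ℝ | ∃ ρ : Matrix (Fin d) (Fin d) ℂ,
    ρ.PosSemidef ∧ ρ.trace = 1 ∧ energy H ρ = E ∧ ergotropy H ρ = x}

theorem ConcaveOn.ciInf {ι E : Type*} [Nonempty ι] [AddCommMonoid E] [Module ℝ E] {s : Set E}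
    {f : ι → E → ℝ} (hf : ∀ i, ConcaveOn ℝ s (f i))
    (hbdd : ∀ x ∈ s, BddBelow (Set.range fun i => f i x)) :
    ConcaveOn ℝ s fun x => ⨅ i, f i x := by
  refine ⟨(hf (Classical.arbitrary ι)).1, fun x hx y hy a b ha hb hab => ?_⟩
  refine le_ciInf fun i => ?_
  calc a • (⨅ i, f i x) + b • (⨅ i, f i y) ≤ a • f i x + b • f i y := by
        gcongr
        · exact ciInf_le (hbdd x hx) i
        · exact ciInf_le (hbdd y hy) i
    _ ≤ f i (a • x + b • y) := (hf i).2 hx hy ha hb hab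

theorem ConvexOn.sInf_image_fiber {E F : Type*} [AddCommMonoid E] [Module ℝ E]
    [AddCommMonoid F] [Module ℝ F] {s : Set E} {f : E → ℝ} (hf : ConvexOn ℝ s f)
    (hbdd : BddBelow (f '' s)) (g : E →ₗ[ℝ] F) :
    ConvexOn ℝ (g '' s) fun t => sInf (f '' {x ∈ s | g x = t}) := by
  refine ⟨hf.1.linear_image g, ?_⟩
  rintro _ ⟨x, hx, rfl⟩ _ ⟨y, hy, rfl⟩ a b ha hb hab
  have hne : ∀ z ∈ s, (f '' {w ∈ s | g w = g z}).Nonempty :=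
    fun z hz => ⟨f z, z, ⟨hz, rfl⟩, rfl⟩
  refine le_of_forall_pos_le_add fun ε hε => ?_
  obtain ⟨_, ⟨x', ⟨hx's, hx'g⟩, rfl⟩, hx'⟩ := Real.lt_sInf_add_pos (hne x hx) hε
  obtain ⟨_, ⟨y', ⟨hy's, hy'g⟩, rfl⟩, hy'⟩ := Real.lt_sInf_add_pos (hne y hy) hε
  have hmix : f (a • x' + b • y') ∈ f '' {z ∈ s | g z = a • g x + b • g y} :=
    ⟨_, ⟨hf.1 hx's hy's ha hb hab, by simp [hx'g, hy'g]⟩, rfl⟩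
  calc sInf _ ≤ f (a • x' + b • y') :=
        csInf_le (hbdd.mono (Set.image_mono fun z hz => hz.1)) hmix
    _ ≤ a • f x' + b • f y' := hf.2 hx's hy's ha hb hab
    _ ≤ a • (sInf (f '' {z ∈ s | g z = g x}) + ε) +
          b • (sInf (f '' {z ∈ s | g z = g y}) + ε) := by
        gcongr
    _ = _ := by simp only [smul_eq_mul]; linear_combination ε * hab

theorem Matrix.isCompact_unitaryGroup {n 𝕜 : Type*} [Fintype n] [DecidableEq n] [RCLike 𝕜] :
    IsCompact (unitaryGroup n 𝕜 : Set (Matrix n n 𝕜)) := by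
  have hbox : IsCompact (Set.univ.pi fun _ : n => Set.univ.pi fun _ : n =>
      Metric.closedBall (0 : 𝕜) 1 : Set (Matrix n n 𝕜)) :=
    isCompact_univ_pi fun _ => isCompact_univ_pi fun _ => isCompact_closedBall 0 1
  refine hbox.of_isClosed_subset (isClosed_unitary (R := Matrix n n 𝕜)) ?_
  intro U hU i _ j _
  simpa using entry_norm_bound_of_unitary hU i j

def densityMatrices (n : Type*) [Fintype n] : Set (Matrix n n ℂ) :=
  {ρ | ρ.PosSemidef ∧ ρ.trace = 1}

theorem convex_densityMatrices (n : Type*) [Fintype n] : Convex ℝ (densityMatrices n) := by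
  rintro ρ ⟨hρ, hρ1⟩ σ ⟨hσ, hσ1⟩ a b ha hb hab
  refine ⟨(hρ.smul ha).add (hσ.smul hb), ?_⟩
  simp only [trace_add, trace_smul, hρ1, hσ1, Complex.real_smul, mul_one]
  exact_mod_cast hab

theorem vecMulVec_mem_densityMatrices {n : Type*} [Fintype n] {v : EuclideanSpace ℂ n}
    (hv : ‖v‖ = 1) : vecMulVec ⇑v (star ⇑v) ∈ densityMatrices n := by
  refine ⟨posSemidef_vecMulVec_self_star _, ?_⟩
  rw [trace_vecMulVec, ← EuclideanSpace.inner_eq_star_dotProduct, inner_self_eq_norm_sq_to_K, hv]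
  simp

section Energy

variable {d : ℕ} (H : Matrix (Fin d) (Fin d) ℂ)

noncomputable def energyLinearMap : Matrix (Fin d) (Fin d) ℂ →ₗ[ℝ] ℝ where
  toFun := energy H
  map_add' ρ σ := by simp [energy, add_mul]
  map_smul' a ρ := by simp [energy]

noncomputable def passiveEnergy (ρ : Matrix (Fin d) (Fin d) ℂ) : ℝ :=
  ⨅ U : unitaryGroup (Fin d) ℂ, energy H (U.1 * ρ * star U.1)

theorem bddBelow_range_energy_conj (ρ : Matrix (Fin d) (Fin d) ℂ) :
    BddBelow (Set.range fun U : unitaryGroup (Fin d) ℂ => energy H (U.1 * ρ * star U.1)) := by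
  have hcont : Continuous fun U : Matrix (Fin d) (Fin d) ℂ => energy H (U * ρ * star U) := by
    unfold energy
    exact Complex.continuous_re.comp ((((continuous_id.matrix_mul continuous_const).matrix_mul
      continuous_star).matrix_mul continuous_const).matrix_trace)
  simpa [Set.image_eq_range] using (isCompact_unitaryGroup.image hcont).bddBelow

theorem concaveOn_passiveEnergy : ConcaveOn ℝ Set.univ (passiveEnergy H) :=
  ConcaveOn.ciInf
    (fun U => (energyLinearMap H ∘ₗ LinearMap.mulRight ℝ (star U.1) ∘ₗ
      LinearMap.mulLeft ℝ U.1).concaveOn convex_univ)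
    fun ρ _ => bddBelow_range_energy_conj H ρ

theorem convexOn_ergotropy : ConvexOn ℝ Set.univ (ergotropy H) :=
  ((energyLinearMap H).convexOn convex_univ).sub (concaveOn_passiveEnergy H)

theorem ergotropy_nonneg (ρ : Matrix (Fin d) (Fin d) ℂ) : 0 ≤ ergotropy H ρ :=
  sub_nonneg.2 <| (ciInf_le (bddBelow_range_energy_conj H ρ) 1).trans_eq (by simp)

theorem energy_vecMulVec_eigenvectorBasis (hH : H.IsHermitian) (i : Fin d) :
    energy H (vecMulVec ⇑(hH.eigenvectorBasis i) (star ⇑(hH.eigenvectorBasis i))) =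
      hH.eigenvalues i := by
  rw [hH.eigenvalues_eq i, energy, vecMulVec_mul, trace_vecMulVec, dotProduct_comm,
    ← dotProduct_mulVec]
  rfl

theorem Icc_eigenvalues_subset_energy_image [NeZero d] (hH : H.IsHermitian) :
    Set.Icc (⨅ i, hH.eigenvalues i) (⨆ i, hH.eigenvalues i) ⊆
      energy H '' densityMatrices (Fin d) := by
  have hmem (i : Fin d) : hH.eigenvalues i ∈ energy H '' densityMatrices (Fin d) :=
    ⟨_, vecMulVec_mem_densityMatrices (hH.eigenvectorBasis.orthonormal.1 i),
      energy_vecMulVec_eigenvectorBasis H hH i⟩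
  obtain ⟨i, hi⟩ := exists_eq_ciInf_of_finite (f := hH.eigenvalues)
  obtain ⟨j, hj⟩ := exists_eq_ciSup_of_finite (f := hH.eigenvalues)
  intro E hE
  rw [← hi, ← hj, ← segment_eq_Icc (hE.1.trans hE.2)] at hE
  exact ((convex_densityMatrices _).linear_image (energyLinearMap H)).segment_subset
    (hmem i) (hmem j) hE

theorem minErg_eq_sInf_image :
    minErg H = fun E =>
      sInf (ergotropy H '' {ρ ∈ densityMatrices (Fin d) | energy H ρ = E}) := by
  ext E
  simp only [minErg, densityMatrices, Set.image, Set.mem_ofPred_eq, and_assoc]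

end Energy

/-- The energy-constrained minimum ergotropy is convex in the mean energy. -/
theorem minErg_convexOn {d : ℕ} [NeZero d] (H : Matrix (Fin d) (Fin d) ℂ)
    (hH : H.IsHermitian) :
    ConvexOn ℝ (Set.Icc (⨅ i, hH.eigenvalues i) (⨆ i, hH.eigenvalues i)) (minErg H) := by
  have hconvex : ConvexOn ℝ (densityMatrices (Fin d)) (ergotropy H) :=
    (convexOn_ergotropy H).subset (Set.subset_univ _) (convex_densityMatrices _)
  have hbdd : BddBelow (ergotropy H '' densityMatrices (Fin d)) :=
    ⟨0, by rintro _ ⟨ρ, -, rfl⟩; exact ergotropy_nonneg H ρ⟩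
  rw [minErg_eq_sInf_image]
  exact (hconvex.sInf_image_fiber hbdd (energyLinearMap H)).subset
    (Icc_eigenvalues_subset_energy_image H hH) (convex_Icc _ _)
end

section
/- For any density matrix ρ with eigenvalue vector λ and Hamiltonian H with eigenvalue vector ε, the ergotropy equals E(ρ) = Tr[ρH] - λ↓·ε↑, where λ↓ is λ sorted in decreasing order and ε↑ is ε sorted in increasing order; i.e., min over unitaries U of Tr[UρU†H] = λ↓·ε↑. -/
open Matrix
open scoped BigOperators ComplexOrder

/-!
Write `ρ = P diag(λ) P*` and `H = Q diag(ε) Q*` with unitaries `P`, `Q` whose columns are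
eigenvectors listed in the order of `λ` and `ε`. Then the energy of `U ρ U*` is `∑ᵢ (B λ)ᵢ εᵢ`,
where `B = (|(Q* U P)ᵢⱼ|²)` is doubly stochastic. By Birkhoff's theorem `B` is a convex combination
of permutation matrices, on each of which the rearrangement inequality gives the lower bound
`∑ᵢ λᵢ εᵢ`; it is attained at `U = Q P*`, where `B = 1`.
-/

open Complex

section

variable {n : Type*} [Fintype n] [DecidableEq n]

lemma Antivary.sum_mul_le_sum_mulVec_mul {f g : n → ℝ} (hfg : Antivary f g)
    {B : Matrix n n ℝ} (hB : B ∈ doublyStochastic ℝ n) :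
    ∑ i, f i * g i ≤ ∑ i, (B *ᵥ f) i * g i := by
  have hlin : IsLinearMap ℝ fun M : Matrix n n ℝ => ∑ i, (M *ᵥ f) i * g i :=
    ⟨fun M N => by simp [add_mulVec, add_mul, Finset.sum_add_distrib],
      fun c M => by simp [smul_mulVec, Finset.mul_sum, mul_assoc]⟩
  rw [← SetLike.mem_coe, doublyStochastic_eq_convexHull_permMatrix] at hB
  refine convexHull_min ?_ (convex_halfSpace_ge hlin _) hB
  rintro _ ⟨σ, rfl⟩
  simpa [permMatrix_mulVec] using hfg.sum_mul_le_sum_comp_perm_mul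

lemma Matrix.map_normSq_mem_doublyStochastic {U : Matrix n n ℂ} (hU : U ∈ unitaryGroup n ℂ) :
    U.map normSq ∈ doublyStochastic ℝ n := by
  refine mem_doublyStochastic_iff_sum.mpr ⟨fun i j => normSq_nonneg _, fun i => ?_, fun j => ?_⟩
  · have h := congr_fun₂ (mem_unitaryGroup_iff.mp hU) i i
    simp only [mul_apply, star_apply, star_def, mul_conj', one_apply_eq] at h
    simp only [map_apply, normSq_eq_norm_sq]
    exact_mod_cast h
  · have h := congr_fun₂ (mem_unitaryGroup_iff'.mp hU) j j
    simp only [mul_apply, star_apply, star_def, conj_mul', one_apply_eq] at h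
    simp only [map_apply, normSq_eq_norm_sq]
    exact_mod_cast h

lemma Matrix.submatrix_id_mem_unitaryGroup {α : Type*} [CommRing α] [StarRing α]
    {U : Matrix n n α} (hU : U ∈ unitaryGroup n α) (σ : Equiv.Perm n) :
    U.submatrix id σ ∈ unitaryGroup n α := by
  rw [mem_unitaryGroup_iff, star_eq_conjTranspose, conjTranspose_submatrix,
    ← Equiv.coe_refl, submatrix_mul_equiv, ← star_eq_conjTranspose, mem_unitaryGroup_iff.mp hU,
    submatrix_one_equiv]

lemma Matrix.submatrix_id_mul_diagonal_mul_star {α : Type*} [CommRing α] [StarRing α]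
    (V : Matrix n n α) (a : n → α) (σ : Equiv.Perm n) :
    V.submatrix id σ * diagonal (a ∘ σ) * star (V.submatrix id σ) = V * diagonal a * star V := by
  rw [star_eq_conjTranspose, conjTranspose_submatrix, ← submatrix_diagonal_equiv,
    ← Equiv.coe_refl, submatrix_mul_equiv, submatrix_mul_equiv, Equiv.coe_refl,
    submatrix_id_id, star_eq_conjTranspose]

lemma Matrix.re_trace_mul_diagonal_mul_star_mul_diagonal (N : Matrix n n ℂ) (a b : n → ℝ) :
    (trace (N * diagonal (ofReal ∘ a) * star N * diagonal (ofReal ∘ b))).re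
      = ∑ i, (N.map normSq *ᵥ a) i * b i := by
  rw [trace, re_sum]
  refine Finset.sum_congr rfl fun i _ => ?_
  rw [diag_apply, mul_diagonal, mul_apply, Finset.sum_mul, re_sum, mulVec, dotProduct,
    Finset.sum_mul]
  refine Finset.sum_congr rfl fun j _ => ?_
  rw [mul_diagonal, star_apply, map_apply, mul_right_comm (N i j), star_def, mul_conj,
    Function.comp_apply, Function.comp_apply]
  norm_cast

lemma Matrix.re_trace_conj_mul_conj (U P Q : Matrix n n ℂ) (a b : n → ℝ) :
    (trace (U * (P * diagonal (ofReal ∘ a) * star P) * star U *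
        (Q * diagonal (ofReal ∘ b) * star Q))).re
      = ∑ i, ((star Q * U * P).map normSq *ᵥ a) i * b i := by
  rw [← re_trace_mul_diagonal_mul_star_mul_diagonal, ← mul_assoc _ (Q * _), trace_mul_cycle]
  simp only [star_mul, star_star, mul_assoc]

end

theorem min_energy_unitaries_general {d : ℕ} (H ρ : Matrix (Fin d) (Fin d) ℂ)
    (hH : H.IsHermitian) (hρ : ρ.PosSemidef)
    (lam eps : Fin d → ℝ) (σ τ : Equiv.Perm (Fin d))
    (hlam : lam = hρ.1.eigenvalues ∘ σ) (hanti : Antitone lam)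
    (heps : eps = hH.eigenvalues ∘ τ) (hmono : Monotone eps) :
    (⨅ U : Matrix.unitaryGroup (Fin d) ℂ,
      energy H ((U : Matrix (Fin d) (Fin d) ℂ) * ρ * star (U : Matrix (Fin d) (Fin d) ℂ)))
      = ∑ i, lam i * eps i := by
  set P := (hρ.1.eigenvectorUnitary : Matrix (Fin d) (Fin d) ℂ).submatrix id σ
  set Q := (hH.eigenvectorUnitary : Matrix (Fin d) (Fin d) ℂ).submatrix id τ
  have hP : P ∈ unitaryGroup (Fin d) ℂ := submatrix_id_mem_unitaryGroup hρ.1.eigenvectorUnitary.2 σ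
  have hQ : Q ∈ unitaryGroup (Fin d) ℂ := submatrix_id_mem_unitaryGroup hH.eigenvectorUnitary.2 τ
  have hρP : ρ = P * diagonal (ofReal ∘ lam) * star P := by
    rw [hlam, ← Function.comp_assoc, submatrix_id_mul_diagonal_mul_star]
    exact hρ.1.spectral_theorem
  have hHQ : H = Q * diagonal (ofReal ∘ eps) * star Q := by
    rw [heps, ← Function.comp_assoc, submatrix_id_mul_diagonal_mul_star]
    exact hH.spectral_theorem
  have henergy (U : Matrix (Fin d) (Fin d) ℂ) :
      energy H (U * ρ * star U) = ∑ i, ((star Q * U * P).map normSq *ᵥ lam) i * eps i := by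
    rw [energy, hρP, hHQ, re_trace_conj_mul_conj]
  have hopt : energy H (Q * star P * ρ * star (Q * star P)) = ∑ i, lam i * eps i := by
    rw [henergy, show star Q * (Q * star P) * P = 1 by
      rw [← mul_assoc, mem_unitaryGroup_iff'.mp hQ, one_mul, mem_unitaryGroup_iff'.mp hP]]
    simp
  refine IsLeast.csInf_eq ⟨⟨⟨Q * star P, mul_mem hQ (Unitary.star_mem hP)⟩, hopt⟩, ?_⟩
  rintro _ ⟨⟨U, hU⟩, rfl⟩
  dsimp only
  rw [henergy]
  exact (hmono.antivary hanti).symm.sum_mul_le_sum_mulVec_mul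
    (map_normSq_mem_doublyStochastic (mul_mem (mul_mem (Unitary.star_mem hQ) hU) hP))

/-- The minimal energy reachable by unitaries equals the scalar product of the
decreasingly ordered spectrum of ρ with the increasingly ordered spectrum of H. -/
theorem min_energy_unitaries {d : ℕ} (H ρ : Matrix (Fin d) (Fin d) ℂ)
    (hH : H.IsHermitian) (hρ : ρ.PosSemidef) (ht : ρ.trace = 1)
    (lam eps : Fin d → ℝ) (σ τ : Equiv.Perm (Fin d))
    (hlam : lam = hρ.1.eigenvalues ∘ σ) (hanti : Antitone lam)
    (heps : eps = hH.eigenvalues ∘ τ) (hmono : Monotone eps) :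
    (⨅ U : Matrix.unitaryGroup (Fin d) ℂ,
      energy H ((U : Matrix (Fin d) (Fin d) ℂ) * ρ * star (U : Matrix (Fin d) (Fin d) ℂ)))
      = ∑ i, lam i * eps i :=
  min_energy_unitaries_general H ρ hH hρ lam eps σ τ hlam hanti heps hmono
end

section
/- For any vector λ in the probability simplex of ℝ^d, any doubly stochastic matrix M, and any real vector ε sorted increasingly, (Mλ)↑ · ε↑ ≤ λ↑ · ε↑, where x↑ denotes the increasing rearrangement of x. -/
/-!
The left-hand side is a linear function of `M`, so by Birkhoff's theorem it suffices to bound it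
at permutation matrices. There `M *ᵥ lam` is a rearrangement of `lam`, and the rearrangement
inequality says that pairing the monotone `eps` with the increasing rearrangement of `lam`
maximises the sum.
-/

open Matrix in
theorem dotProduct_mulVec_le_of_mem_doublyStochastic {R n : Type*} [Field R] [LinearOrder R]
    [IsStrictOrderedRing R] [Fintype n] [DecidableEq n] {M : Matrix n n R}
    (hM : M ∈ doublyStochastic R n) {x w : n → R} {C : R}
    (hperm : ∀ π : Equiv.Perm n, (x ∘ π) ⬝ᵥ w ≤ C) :
    M *ᵥ x ⬝ᵥ w ≤ C := by
  have hlin : IsLinearMap R fun A : Matrix n n R => A *ᵥ x ⬝ᵥ w :=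
    ⟨fun A B => by rw [add_mulVec, add_dotProduct],
     fun c A => by rw [smul_mulVec, smul_dotProduct]⟩
  rw [← SetLike.mem_coe, doublyStochastic_eq_convexHull_permMatrix] at hM
  refine convexHull_min ?_ (convex_halfSpace_le hlin C) hM
  rintro _ ⟨π, rfl⟩
  simpa only [Set.mem_ofPred_eq, permMatrix_mulVec] using hperm π

theorem sum_comp_perm_mul_le_of_monotone {ι R : Type*} [LinearOrder ι] [Fintype ι]
    [CommRing R] [LinearOrder R] [IsStrictOrderedRing R] {x ε : ι → R} {τ : Equiv.Perm ι}
    (hτ : Monotone (x ∘ τ)) (hε : Monotone ε) (π : Equiv.Perm ι) :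
    ∑ i, x (π i) * ε i ≤ ∑ i, x (τ i) * ε i := by
  simpa using (hτ.monovary hε).sum_comp_perm_mul_le_sum_mul (σ := τ.symm * π)

theorem doublyStochastic_increasing_dot_general {d : ℕ} (lam : Fin d → ℝ)
    (M : Matrix (Fin d) (Fin d) ℝ) (hMnn : ∀ i j, 0 ≤ M i j)
    (hrow : ∀ i, ∑ j, M i j = 1) (hcol : ∀ j, ∑ i, M i j = 1)
    (eps : Fin d → ℝ) (hmono : Monotone eps)
    (σ τ : Equiv.Perm (Fin d))
    (hτ : Monotone (lam ∘ τ)) :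
    ∑ i, (M.mulVec lam ∘ σ) i * eps i ≤ ∑ i, (lam ∘ τ) i * eps i := by
  have hM : M ∈ doublyStochastic ℝ (Fin d) := mem_doublyStochastic_iff_sum.2 ⟨hMnn, hrow, hcol⟩
  have hreindex (y : Fin d → ℝ) : ∑ i, y (σ i) * eps i = y ⬝ᵥ (eps ∘ σ.symm) := by
    simp [dotProduct, ← Equiv.sum_comp σ (fun j => y j * eps (σ.symm j))]
  rw [Function.comp_def, hreindex]
  refine dotProduct_mulVec_le_of_mem_doublyStochastic hM fun π => ?_
  rw [← hreindex]
  exact sum_comp_perm_mul_le_of_monotone hτ hmono (π * σ)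

/-- Applying a doubly stochastic matrix can only decrease the scalar product of the
increasing rearrangement with an increasingly sorted vector. -/
theorem doublyStochastic_increasing_dot {d : ℕ} (lam : Fin d → ℝ)
    (hnn : ∀ i, 0 ≤ lam i) (hsum : ∑ i, lam i = 1)
    (M : Matrix (Fin d) (Fin d) ℝ) (hMnn : ∀ i j, 0 ≤ M i j)
    (hrow : ∀ i, ∑ j, M i j = 1) (hcol : ∀ j, ∑ i, M i j = 1)
    (eps : Fin d → ℝ) (hmono : Monotone eps)
    (σ τ : Equiv.Perm (Fin d))
    (hσ : Monotone (M.mulVec lam ∘ σ)) (hτ : Monotone (lam ∘ τ)) :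
    ∑ i, (M.mulVec lam ∘ σ) i * eps i ≤ ∑ i, (lam ∘ τ) i * eps i :=
  doublyStochastic_increasing_dot_general lam M hMnn hrow hcol eps hmono σ τ hτ
end

section
/- The set of passive states (density matrices diagonal in the ordered eigenbasis of H with decreasingly ordered eigenvalues) is the convex hull of the d states ρ_k↓ := (1/k) Σ_{h=1}^k |ε_h⟩⟨ε_h| for k = 1,...,d; i.e., every passive state is a convex combination of the ρ_k↓, and conversely every such convex combination is passive. -/
open scoped BigOperators

lemma sum_ite_le_card {d : ℕ} (k : Fin d) (c : ℝ) :
    ∑ i : Fin d, (if i ≤ k then c else 0) = (k.1 + 1) * c := by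
  rw [← Finset.sum_filter]
  have h : Finset.univ.filter (fun i : Fin d => i ≤ k) = Finset.Iic k := by
    ext i; simp
  rw [h, Finset.sum_const, Fin.card_Iic, nsmul_eq_mul]
  push_cast; ring

lemma telescope_Ico (f : ℕ → ℝ) {i d : ℕ} (h : i ≤ d) :
    ∑ k ∈ Finset.Ico i d, (f k - f (k + 1)) = f i - f d := by
  rw [Finset.sum_Ico_eq_sub _ h, Finset.sum_range_sub', Finset.sum_range_sub']
  ring

/-- The set of passive states (diagonal with decreasingly ordered eigenvalues in the
ordered energy eigenbasis) is the convex hull of the d uniform flat states ρ_k↓. -/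
theorem passive_states_convexHull {d : ℕ} :
    {ρ : Matrix (Fin d) (Fin d) ℂ | ∃ lam : Fin d → ℝ, Antitone lam ∧ (∀ i, 0 ≤ lam i) ∧
        (∑ i, lam i = 1) ∧ ρ = Matrix.diagonal (fun i => (lam i : ℂ))}
      = convexHull ℝ (Set.range (fun k : Fin d =>
          Matrix.diagonal (fun h : Fin d => if h ≤ k then (1 / (k.1 + 1) : ℂ) else 0))) := by
  apply Set.Subset.antisymm
  · -- passive ⊆ hull
    rintro ρ ⟨lam, hanti, hpos, hsum, rfl⟩
    classical
    set μ : ℕ → ℝ := fun n => if h : n < d then lam ⟨n, h⟩ else 0 with hμ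
    have hμd : μ d = 0 := by simp [hμ]
    have hμmono : ∀ n, μ (n + 1) ≤ μ n := by
      intro n
      by_cases h : n + 1 < d
      · have h' : n < d := Nat.lt_of_succ_lt h
        simp only [hμ, dif_pos h, dif_pos h']
        exact hanti (show (⟨n, h'⟩ : Fin d) ≤ ⟨n + 1, h⟩ from Fin.mk_le_mk.mpr (Nat.le_succ n))
      · by_cases h' : n < d
        · simp only [hμ, dif_neg h, dif_pos h']; exact hpos _
        · simp only [hμ, dif_neg h, dif_neg h']; exact le_refl 0
    have hμval : ∀ i : Fin d, μ i.1 = lam i := by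
      intro i; simp [hμ, i.2]
    set w : Fin d → ℝ := fun k => (k.1 + 1) * (μ k.1 - μ (k.1 + 1)) with hw
    have hw0 : ∀ k : Fin d, 0 ≤ w k := by
      intro k
      have := hμmono k.1
      have : (0 : ℝ) ≤ μ k.1 - μ (k.1 + 1) := by linarith
      positivity
    -- telescoping key
    have htel : ∀ i : Fin d, ∑ k : Fin d, (if i ≤ k then μ k.1 - μ (k.1 + 1) else 0) = lam i := by
      intro i
      simp only [Fin.le_def]
      rw [Fin.sum_univ_eq_sum_range (fun k => if i.1 ≤ k then μ k - μ (k + 1) else 0)]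
      · rw [← Finset.sum_filter]
        have hf : (Finset.range d).filter (fun k => i.1 ≤ k) = Finset.Ico i.1 d := by
          ext m; simp [Finset.mem_Ico, and_comm]
        rw [hf, telescope_Ico _ (le_of_lt i.2), hμd, hμval]
        ring
    have hwsum : ∑ k, w k = 1 := by
      have : ∀ k : Fin d, w k = ∑ i : Fin d, (if i ≤ k then μ k.1 - μ (k.1 + 1) else 0) := by
        intro k; rw [sum_ite_le_card]
      rw [Finset.sum_congr rfl (fun k _ => this k), Finset.sum_comm]
      rw [Finset.sum_congr rfl (fun i _ => htel i), hsum]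
    -- the convex combination
    have key : Matrix.diagonal (fun i => (lam i : ℂ)) =
        ∑ k : Fin d, w k • Matrix.diagonal
          (fun h : Fin d => if h ≤ k then (1 / (k.1 + 1) : ℂ) else 0) := by
      ext i j
      rw [Matrix.sum_apply]
      by_cases hij : i = j
      · subst hij
        simp only [Matrix.diagonal_apply_eq, Matrix.smul_apply]
        have hterm : ∀ k : Fin d, w k • (if i ≤ k then (1 / (k.1 + 1) : ℂ) else 0)
            = ((if i ≤ k then μ k.1 - μ (k.1 + 1) else 0 : ℝ) : ℂ) := by
          intro k
          split_ifs with h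
          · rw [Complex.real_smul, hw]
            have hk : ((k.1 : ℂ) + 1) ≠ 0 := by
              exact_mod_cast (Nat.cast_add_one_ne_zero k.1 : ((k.1 : ℂ) + 1) ≠ 0)
            push_cast
            field_simp
          · simp
        rw [Finset.sum_congr rfl (fun k _ => hterm k), ← Complex.ofReal_sum, htel]
      · simp only [Matrix.diagonal_apply_ne _ hij, Matrix.smul_apply, smul_zero,
          Finset.sum_const_zero]
    rw [key]
    rw [← Finset.centerMass_eq_of_sum_1 _ _ hwsum]
    exact Finset.centerMass_mem_convexHull _ (fun k _ => hw0 k) (by rw [hwsum]; norm_num)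
      (fun k _ => Set.mem_range_self k)
  · -- hull ⊆ passive
    apply convexHull_min
    · rintro _ ⟨k, rfl⟩
      refine ⟨fun i => if i ≤ k then 1 / (k.1 + 1) else 0, ?_, ?_, ?_, ?_⟩
      · intro i j hij
        dsimp only
        split_ifs with h1 h2 h2
        · exact le_refl _
        · exact absurd (le_trans hij h1) h2
        · positivity
        · exact le_refl _
      · intro i; dsimp only; split_ifs <;> positivity
      · rw [sum_ite_le_card]
        have hk : ((k.1 : ℝ) + 1) ≠ 0 := by positivity
        field_simp
      · dsimp only
        have hfun : (fun i : Fin d => ((if i ≤ k then 1 / (k.1 + 1) else 0 : ℝ) : ℂ)) =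
            (fun h : Fin d => if h ≤ k then (1 / (k.1 + 1) : ℂ) else 0) := by
          funext i; split_ifs with h <;> push_cast <;> ring
        rw [hfun]
    · -- convexity of the passive set
      rintro x ⟨f, hf1, hf2, hf3, rfl⟩ y ⟨g, hg1, hg2, hg3, rfl⟩ a b ha hb hab
      refine ⟨fun i => a * f i + b * g i, ?_, ?_, ?_, ?_⟩
      · intro i j hij
        have h1 := hf1 hij
        have h2 := hg1 hij
        have := mul_le_mul_of_nonneg_left h1 ha
        have := mul_le_mul_of_nonneg_left h2 hb
        dsimp only; linarith
      · intro i
        exact add_nonneg (mul_nonneg ha (hf2 i)) (mul_nonneg hb (hg2 i))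
      · rw [Finset.sum_add_distrib, ← Finset.mul_sum, ← Finset.mul_sum, hf3, hg3]
        linarith
      · ext i j
        by_cases hij : i = j
        · subst hij
          simp only [Matrix.add_apply, Matrix.smul_apply, Matrix.diagonal_apply_eq,
            Complex.real_smul]
          push_cast; ring
        · simp only [Matrix.add_apply, Matrix.smul_apply, Matrix.diagonal_apply_ne _ hij,
            smul_zero, add_zero]
end

section
/- For the qutrit with energies ε₁ = 0, ε₂ = ε(1+δ), ε₃ = 2ε and δ ≤ 0, the population-reversal unitary U_rev (swapping levels 1 and 3) satisfies: the minimum over all density matrices ρ with Tr[ρH] = E of the extracted energy Tr[ρH] - Tr[U_rev ρ U_rev† H] equals 2(E - ε). -/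
open Matrix
open scoped BigOperators ComplexOrder

/-! Conjugation by `U_rev`, the permutation matrix of the transposition `(0 2)`, swaps the ground
and top populations `p₀, p₂`, so the extracted energy is `2ε (p₂ - p₀)`. With `p₀ + p₁ + p₂ = 1`
and `E = ε(1+δ) p₁ + 2ε p₂` this is `2(E - ε) - 2εδ p₁ ≥ 2(E - ε)` because `δ ≤ 0`, with equality
for the diagonal state with `p₁ = 0`. -/

theorem Matrix.permMatrix_mul_mul_star_permMatrix {n R : Type*} [Fintype n] [DecidableEq n]
    [NonAssocSemiring R] [StarRing R] (σ : Equiv.Perm n) (M : Matrix n n R) :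
    σ.permMatrix R * M * star (σ.permMatrix R) = M.submatrix σ σ := by
  rw [star_eq_conjTranspose, conjTranspose_permMatrix, PEquiv.toMatrix_toPEquiv_mul,
    PEquiv.mul_toMatrix_toPEquiv]
  rfl

theorem Matrix.re_trace {n : Type*} [Fintype n] (ρ : Matrix n n ℂ) :
    ρ.trace.re = ∑ i, (ρ i i).re := by
  simp [trace, Complex.re_sum]

theorem Matrix.PosSemidef.re_diag_nonneg {n : Type*} [Fintype n] {ρ : Matrix n n ℂ}
    (hρ : ρ.PosSemidef) (i : n) : 0 ≤ (ρ i i).re :=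
  (Complex.nonneg_iff.1 hρ.diag_nonneg).1

theorem energy_diagonal {d : ℕ} (v : Fin d → ℝ) (ρ : Matrix (Fin d) (Fin d) ℂ) :
    energy (diagonal fun i => (v i : ℂ)) ρ = ∑ i, v i * (ρ i i).re := by
  simp [energy, trace, mul_diagonal, Complex.re_sum, mul_comm]

theorem energy_sub_energy_conj_swap {d : ℕ} (v : Fin d → ℝ) (ρ : Matrix (Fin d) (Fin d) ℂ)
    {i j : Fin d} (hij : i ≠ j) :
    energy (diagonal fun k => (v k : ℂ)) ρ
      - energy (diagonal fun k => (v k : ℂ))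
          ((Equiv.swap i j).permMatrix ℂ * ρ * star ((Equiv.swap i j).permMatrix ℂ))
      = (v j - v i) * ((ρ j j).re - (ρ i i).re) := by
  rw [permMatrix_mul_mul_star_permMatrix, energy_diagonal, energy_diagonal]
  simp only [submatrix_apply]
  rw [← Equiv.sum_comp (Equiv.swap i j)
    (fun k => v k * (ρ (Equiv.swap i j k) (Equiv.swap i j k)).re)]
  simp only [Equiv.swap_apply_self, ← Finset.sum_sub_distrib, ← sub_mul]
  rw [Fintype.sum_eq_add i j hij]
  · simp
    ring
  · rintro k ⟨hki, hkj⟩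
    simp [Equiv.swap_apply_of_ne_of_ne hki hkj]

theorem reversal_eq_permMatrix_swap :
    (!![0,0,1;0,1,0;1,0,0] : Matrix (Fin 3) (Fin 3) ℂ) = (Equiv.swap 0 2).permMatrix ℂ := by
  ext i j
  fin_cases i <;> fin_cases j <;> simp [PEquiv.toMatrix_apply, Equiv.swap_apply_of_ne_of_ne]

/-- For the qutrit with energies 0, ε(1+δ), 2ε and δ ≤ 0, the worst-case energy
extracted by the population-reversal unitary over states of mean energy E is 2(E-ε). -/
theorem qutrit_reversal_worst_case (ε δ E : ℝ) (hε : 0 < ε)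
    (hδ : δ ∈ Set.Icc (-1 : ℝ) 0) (hE : E ∈ Set.Icc (0 : ℝ) (2 * ε)) :
    sInf {x : ℝ | ∃ ρ : Matrix (Fin 3) (Fin 3) ℂ, ρ.PosSemidef ∧ ρ.trace = 1 ∧
        energy (Matrix.diagonal fun i => ((![0, ε * (1 + δ), 2 * ε] i : ℝ) : ℂ)) ρ = E ∧
        x = energy (Matrix.diagonal fun i => ((![0, ε * (1 + δ), 2 * ε] i : ℝ) : ℂ)) ρ
          - energy (Matrix.diagonal fun i => ((![0, ε * (1 + δ), 2 * ε] i : ℝ) : ℂ))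
              ((!![0,0,1;0,1,0;1,0,0] : Matrix (Fin 3) (Fin 3) ℂ) * ρ *
                star (!![0,0,1;0,1,0;1,0,0] : Matrix (Fin 3) (Fin 3) ℂ))}
      = 2 * (E - ε) := by
  obtain ⟨-, hδ0⟩ := hδ
  obtain ⟨hE0, hE2⟩ := hE
  rw [reversal_eq_permMatrix_swap]
  refine IsLeast.csInf_eq ⟨?_, ?_⟩
  · have hp₂ : E / (2 * ε) ≤ 1 := (div_le_one (by positivity)).2 hE2
    refine ⟨diagonal fun i => ((![1 - E / (2 * ε), 0, E / (2 * ε)] i : ℝ) : ℂ), ?_, ?_, ?_, ?_⟩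
    · refine posSemidef_diagonal_iff.2 fun i => Complex.zero_le_real.2 ?_
      fin_cases i <;> simp [hp₂, div_nonneg hE0 (by positivity : (0 : ℝ) ≤ 2 * ε)]
    · simp [trace_diagonal, Fin.sum_univ_three]
    · simp [energy_diagonal, Fin.sum_univ_three]
      field_simp
    · rw [energy_sub_energy_conj_swap _ _ (by decide)]
      simp only [diagonal_apply_eq, Complex.ofReal_re, cons_val_zero, cons_val, sub_zero]
      field_simp
      ring
  · rintro x ⟨ρ, hρ, htr, rfl, rfl⟩
    have hp₁ := hρ.re_diag_nonneg 1
    have hsum : (ρ 0 0).re + (ρ 1 1).re + (ρ 2 2).re = 1 := by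
      simpa [re_trace, Fin.sum_univ_three] using congrArg Complex.re htr
    rw [energy_sub_energy_conj_swap _ _ (by decide), energy_diagonal, Fin.sum_univ_three]
    simp only [cons_val_zero, cons_val_one, cons_val, zero_mul, zero_add, sub_zero]
    nlinarith [mul_nonneg (mul_nonneg hε.le (neg_nonneg.2 hδ0)) hp₁]
end
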